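/- arXiv:2003.00625 — 2 statements merged into one kernel-verified Lean document; each statement's English description precedes it below -/
import Mathlib

section
/- Let H be a graph with a nonempty finite set U ⊆ V(H) of positive integers, let p = (p_1, p_2) be an ordered partition of |U| and p' = (p_2, p_1). Then the sum of T_G(1, y) over all connected graphs G = H ∪ Q, where Q ranges over complete tiered graphs on U with tier sizes p, equals the sum of T_G(1, y) over all connected graphs G = H ∪ Q' where Q' ranges over complete tiered graphs on U with tier sizes p'. Here T_G(x, y) denotes the Tutte polynomial. -/
/-!
For a connected graph, `T_G(1, y) = ∑_A (y - 1)^(|A| - |V| + 1)` over the connected spanning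
subgraphs `A`: each such `A` has exactly one spanning tree `T` with respect to which every edge
of `A \ T` is externally active (its maximum-weight spanning tree), and
`y^ea(T) = ∑_{X ⊆ EA(T)} (y - 1)^|X|`. Both sides thus become sums over pairs `(S, A)`, with
`S` the first tier and `A` a connected spanning subgraph of `H ∪ Q_S`. The componentwise dual
reverses the order of the vertices inside each component of the `Q`-part of `A` and swaps the
tiers; it turns `Q_S`-edges into `Q_{S*}`-edges with `|S*| = |U| - |S|`, keeps the components
and the number of edges, and is an involution. It therefore matches the pairs for `(p₁, p₂)`
with those for `(p₂, p₁)`.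
-/

open Finset

attribute [local instance 10] Classical.propDecidable

noncomputable section

/-- An edge of a simple graph on `ℕ`, stored as an ordered pair `(u,v)` with `u < v` intended. -/
abbrev PEdge : Type := ℕ × ℕ

/-- A labelled edge (for multigraphs): an endpoint pair together with a label. -/
abbrev LEdge : Type := (ℕ × ℕ) × ℕ

def adjP (E : Finset PEdge) (u v : ℕ) : Prop := (u, v) ∈ E ∨ (v, u) ∈ E

def reachP (E : Finset PEdge) : ℕ → ℕ → Prop := Relation.ReflTransGen (adjP E)

def connP (V : Finset ℕ) (E : Finset PEdge) : Prop :=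
  (∀ e ∈ E, e.1 ∈ V ∧ e.2 ∈ V) ∧ ∀ u ∈ V, ∀ v ∈ V, reachP E u v

def IsTreeOn (V : Finset ℕ) (E : Finset PEdge) : Prop := connP V E ∧ E.card + 1 = V.card

/-- A graph on a finite set of naturals together with a tiering map. -/
structure PreGraph where
  V : Finset ℕ
  E : Finset PEdge
  t : ℕ → ℕ

/-- `G` is a tiered graph with two tiers. -/
def IsTiered (G : PreGraph) : Prop :=
  (∀ v ∈ G.V, 0 < v) ∧
  (∀ e ∈ G.E, e.1 ∈ G.V ∧ e.2 ∈ G.V ∧ e.1 < e.2) ∧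
  (∀ v ∈ G.V, G.t v = 1 ∨ G.t v = 2) ∧
  (∀ e ∈ G.E, G.t e.1 < G.t e.2)

/-- acyclicity: every edge is a bridge. -/
def IsForest (G : PreGraph) : Prop := ∀ e ∈ G.E, ¬ reachP (G.E.erase e) e.1 e.2

def IsTreeG (G : PreGraph) : Prop := IsTreeOn G.V G.E

/-- the connected component (vertex set) of `x`. -/
def comp (V : Finset ℕ) (E : Finset PEdge) (x : ℕ) : Finset ℕ :=
  V.filter fun y => reachP E x y

/-- the order-reversing involution `x_i ↦ x_{s+1-i}` of a finite set `V = {x_1 < ... < x_s}`. -/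
def flipMap (V : Finset ℕ) (x : ℕ) : ℕ :=
  if hx : x ∈ V then
    ((V.orderIsoOfFin rfl)
      ⟨V.card - 1 - ((V.orderIsoOfFin rfl).symm ⟨x, hx⟩).1, by
        have h := ((V.orderIsoOfFin rfl).symm ⟨x, hx⟩).isLt; omega⟩).1
  else x

/-- the dual of a (connected) tiered graph, via the global vertex ordering. -/
def dual (G : PreGraph) : PreGraph where
  V := G.V
  E := G.E.image fun e => (flipMap G.V e.2, flipMap G.V e.1)
  t := fun x => if x ∈ G.V then 3 - G.t (flipMap G.V x) else G.t x

/-- the componentwise dual of a (possibly disconnected) tiered graph. -/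
def cdual (G : PreGraph) : PreGraph where
  V := G.V
  E := G.E.image fun e => (flipMap (comp G.V G.E e.1) e.2, flipMap (comp G.V G.E e.1) e.1)
  t := fun x => if x ∈ G.V then 3 - G.t (flipMap (comp G.V G.E x) x) else G.t x

/-- the recursive weight of a tiered tree (fuel-based implementation; the recursion
depth is bounded by the number of vertices). -/
def weightAux : ℕ → PreGraph → ℕ
  | 0, _ => 0
  | fuel + 1, T =>
    if h : 2 ≤ T.V.card then
      let v := T.V.min' (Finset.card_pos.mp (by omega))
      let V' := T.V.erase v
      let E' := T.E.filter fun e => e.1 ≠ v ∧ e.2 ≠ v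
      ∑ u ∈ V'.filter (fun u => adjP T.E v u),
        (((comp V' E' u).filter fun y => y < u ∧ T.t v < T.t y).card
          + weightAux fuel ⟨comp V' E' u, E'.filter fun e => e.1 ∈ comp V' E' u, T.t⟩)
    else 0

def weight (T : PreGraph) : ℕ := weightAux T.V.card T

/-- edges of a complete tiered graph with tier 1 vertex set `A` and tier 2 vertex set `B`. -/
def ctE2 (A B : Finset ℕ) : Finset PEdge := (A ×ˢ B).filter fun e => e.1 < e.2

/-- the edge set of the complete tiered graph determined by a two-tier tiered graph `G`. -/
def ctE (G : PreGraph) : Finset PEdge :=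
  ctE2 (G.V.filter fun v => G.t v = 1) (G.V.filter fun v => G.t v = 2)

/-- edge set of the complete tiered graph on `[n]` determined by a tiering map `t`. -/
def ctEM (n : ℕ) (t : ℕ → ℕ) : Finset PEdge :=
  (Finset.Icc 1 n ×ˢ Finset.Icc 1 n).filter fun e => e.1 < e.2 ∧ t e.1 < t e.2

def extActiveP (T : Finset PEdge) (ω : PEdge → ℝ) (e : PEdge) : Prop :=
  e ∉ T ∧ reachP T e.1 e.2 ∧ ∀ e' ∈ T, ¬ reachP (T.erase e') e.1 e.2 → ω e < ω e'

/-- external activity of the spanning forest `T` in the graph with edge set `E`. -/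
def eaP (E T : Finset PEdge) (ω : PEdge → ℝ) : ℕ := (E.filter (extActiveP T ω)).card

def adjL (E : Finset LEdge) (u v : ℕ) : Prop := ∃ e ∈ E, e.1 = (u, v) ∨ e.1 = (v, u)
def reachL (E : Finset LEdge) : ℕ → ℕ → Prop := Relation.ReflTransGen (adjL E)
def connL (V : Finset ℕ) (E : Finset LEdge) : Prop := ∀ u ∈ V, ∀ v ∈ V, reachL E u v
def IsLTree (V : Finset ℕ) (T : Finset LEdge) : Prop := connL V T ∧ T.card + 1 = V.card

def extActiveL (T : Finset LEdge) (ω : LEdge → ℝ) (e : LEdge) : Prop :=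
  e ∉ T ∧ reachL T e.1.1 e.1.2 ∧ ∀ e' ∈ T, ¬ reachL (T.erase e') e.1.1 e.1.2 → ω e < ω e'

def eaL (E T : Finset LEdge) (ω : LEdge → ℝ) : ℕ := (E.filter (extActiveL T ω)).card

def omega1 (N : ℕ) (e : PEdge) : ℝ := (e.1 : ℝ) + (e.2 : ℝ) / (N : ℝ)
def omega2 (N : ℕ) (e : PEdge) : ℝ := ((N + 1 - e.2 : ℕ) : ℝ) + ((N + 1 - e.1 : ℕ) : ℝ) / (N : ℝ)
def omegaLex (n : ℕ) (e : PEdge) : ℝ := ((e.1 * (n + 1) + e.2 : ℕ) : ℝ)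

/-- representative (minimum) of the component of `x` in the forest `F` on vertex set `V`. -/
def rep (V : Finset ℕ) (F : Finset LEdge) (x : ℕ) : ℕ :=
  if hx : x ∈ V then
    (V.filter fun y => reachL F x y).min'
      ⟨x, Finset.mem_filter.mpr ⟨hx, Relation.ReflTransGen.refl⟩⟩
  else x

/-- image of an edge in the quotient graph `G • F`; the label encodes the original edge. -/
def quotEdge (ρ : ℕ → ℕ) (e : LEdge) : LEdge :=
  ((ρ e.1.1, ρ e.1.2), Nat.pair (Nat.pair e.1.1 e.1.2) e.2)

/-- recover the original edge from a quotient edge. -/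
def decodeE (e : LEdge) : LEdge :=
  (((Nat.unpair (Nat.unpair e.2).1).1, (Nat.unpair (Nat.unpair e.2).1).2), (Nat.unpair e.2).2)

/-- tiering map on `[n]` induced by `f : Fin n → Fin m` (tiers `1,...,m`). -/
def tf (n m : ℕ) (f : Fin n → Fin m) : ℕ → ℕ := fun v =>
  if h : v ∈ Finset.Icc 1 n then
    (f ⟨v - 1, by have := Finset.mem_Icc.mp h; omega⟩).1 + 1
  else 0

/-- `G` is a tiered graph with `m` tiers. -/
def IsTieredM (m : ℕ) (G : PreGraph) : Prop :=
  (∀ e ∈ G.E, e.1 ∈ G.V ∧ e.2 ∈ G.V ∧ e.1 < e.2) ∧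
  (∀ v ∈ G.V, G.t v ∈ Finset.Icc 1 m) ∧
  (∀ e ∈ G.E, G.t e.1 < G.t e.2) ∧
  (∀ i ∈ Finset.Icc 1 m, ∃ v ∈ G.V, G.t v = i)

/-- weight polynomial `P_p(q)` (recursive weight), evaluated at `q`. -/
def Pw (n m : ℕ) (p : ℕ → ℕ) (q : ℤ) : ℤ :=
  ∑ f : Fin n → Fin m,
    ∑ E ∈ ((Finset.Icc 1 n ×ˢ Finset.Icc 1 n).powerset.filter fun E =>
        IsTreeG ⟨Finset.Icc 1 n, E, tf n m f⟩ ∧ IsTieredM m ⟨Finset.Icc 1 n, E, tf n m f⟩ ∧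
        ∀ i ∈ Finset.Icc 1 m, ((Finset.Icc 1 n).filter fun v => tf n m f v = i).card = p i),
      q ^ weight ⟨Finset.Icc 1 n, E, tf n m f⟩

/-- weight polynomial `P_p(q)` with the weight of a tiered tree given by its external
activity in the complete tiered graph it determines (lexicographic edge order). -/
def PwEA (n m : ℕ) (p : ℕ → ℕ) (q : ℤ) : ℤ :=
  ∑ f : Fin n → Fin m,
    ∑ E ∈ ((Finset.Icc 1 n ×ˢ Finset.Icc 1 n).powerset.filter fun E =>
        IsTreeG ⟨Finset.Icc 1 n, E, tf n m f⟩ ∧ IsTieredM m ⟨Finset.Icc 1 n, E, tf n m f⟩ ∧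
        ∀ i ∈ Finset.Icc 1 m, ((Finset.Icc 1 n).filter fun v => tf n m f v = i).card = p i),
      q ^ eaP (ctEM n (tf n m f)) E (omegaLex n)

/-- `T^c_G(y)`: the Tutte evaluation `T_G(1,y)` (spanning tree expansion) for a connected
graph, `0` otherwise. -/
def TcP (V : Finset ℕ) (E : Finset PEdge) (ω : PEdge → ℝ) (y : ℤ) : ℤ :=
  if connP V E then ∑ T ∈ E.powerset.filter (fun T => IsTreeOn V T), y ^ eaP E T ω else 0

/-- edge multiset of `H ∪ Q_S`: `H`-edges (labels `≠ 0`) together with the complete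
tiered graph on `U` with tier-1 set `S` (labelled `0`). -/
def qE (U : Finset ℕ) (EH : Finset LEdge) (S : Finset ℕ) : Finset LEdge :=
  EH ∪ (ctE2 S (U \ S)).image fun p => (p, 0)

/-- `(S,T) ↦ (S*, T*)`: the dual quasi-tiered tree. -/
def dualTree (U : Finset ℕ) (ST : Finset ℕ × Finset LEdge) : Finset ℕ × Finset LEdge :=
  (U.filter fun v =>
      (cdual ⟨U, (ST.2.filter fun e => e.2 = 0).image Prod.fst,
        fun w => if w ∈ ST.1 then 1 else 2⟩).t v = 1,
   (ST.2.filter fun e => e.2 ≠ 0) ∪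
     (cdual ⟨U, (ST.2.filter fun e => e.2 = 0).image Prod.fst,
        fun w => if w ∈ ST.1 then 1 else 2⟩).E.image fun p => (p, 0))

/-- tiered forests on `U` with tier sizes `(p1, p2)` (tier map normalised off `U`). -/
def ForestSet (U : Finset ℕ) (p1 p2 : ℕ) : Set PreGraph :=
  {F | F.V = U ∧ IsTiered F ∧ IsForest F ∧
    (U.filter fun v => F.t v = 1).card = p1 ∧
    (U.filter fun v => F.t v = 2).card = p2 ∧
    ∀ v, v ∉ U → F.t v = 0}

section LabelledGraphs

variable {V : Finset ℕ} {E A T : Finset LEdge} {e f g : LEdge} {x y : ℕ}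

lemma adjL_symm (h : adjL E x y) : adjL E y x := by
  obtain ⟨e, he, h⟩ := h
  exact ⟨e, he, h.symm⟩

lemma reachL_symm (h : reachL E x y) : reachL E y x :=
  Relation.ReflTransGen.mono (fun _ _ => adjL_symm) _ _ (Relation.reflTransGen_swap.2 h)

lemma reachL_mono {E' : Finset LEdge} (hE : E ⊆ E') (h : reachL E x y) : reachL E' x y :=
  Relation.ReflTransGen.mono (fun _ _ ⟨e, he, h⟩ => ⟨e, hE he, h⟩) _ _ h

lemma reachL_of_mem (he : e ∈ E) : reachL E e.1.1 e.1.2 :=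
  Relation.ReflTransGen.single ⟨e, he, Or.inl rfl⟩

lemma connL_mono {E' : Finset LEdge} (hE : E ⊆ E') (h : connL V E) : connL V E' :=
  fun u hu v hv => reachL_mono hE (h u hu v hv)

lemma reachL_empty (h : reachL ∅ x y) : x = y :=
  ((Relation.reflTransGen_iff_eq fun _ ⟨_, he, _⟩ => Finset.notMem_empty _ he).1 h).symm

lemma reachL_erase_or (h : reachL E x y) :
    reachL (E.erase e) x y ∨ reachL (E.erase e) x e.1.1 ∨ reachL (E.erase e) x e.1.2 := by
  induction h with
  | refl => exact Or.inl .refl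
  | @tail b c _ hbc ih =>
    obtain ⟨f, hf, hfbc⟩ := hbc
    by_cases hfe : f = e
    · subst hfe
      rcases ih with ih | ih | ih
      · rcases hfbc with hfbc | hfbc <;> simp only [hfbc] at ih ⊢ <;> tauto
      all_goals tauto
    · have hstep : adjL (E.erase e) b c := ⟨f, Finset.mem_erase.2 ⟨hfe, hf⟩, hfbc⟩
      rcases ih with ih | ih | ih
      exacts [Or.inl (ih.tail hstep), Or.inr (Or.inl ih), Or.inr (Or.inr ih)]

lemma connL.reachL_erase_endpoint (hconn : connL V E) (he : e.1.1 ∈ V) (hx : x ∈ V) :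
    reachL (E.erase e) x e.1.1 ∨ reachL (E.erase e) x e.1.2 := by
  rcases reachL_erase_or (e := e) (hconn x hx e.1.1 he) with h | h | h <;> tauto

lemma reachL_of_reachL_erase {D : Finset LEdge} (hsub : E.erase g ⊆ D)
    (hg : reachL D g.1.1 g.1.2) (h : reachL E x y) : reachL D x y := by
  refine Relation.reflTransGen_closed (fun a b ⟨f, hf, hfab⟩ => ?_) _ _ h
  by_cases hfg : f = g
  · subst hfg
    rcases hfab with hfab | hfab <;> simp only [hfab] at hg
    exacts [hg, reachL_symm hg]
  · exact .single ⟨f, hsub (Finset.mem_erase.2 ⟨hfg, hf⟩), hfab⟩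

lemma exists_mem_not_iff_of_reachL {P : ℕ → Prop} (h : reachL E x y) (hx : P x) (hy : ¬ P y) :
    ∃ g ∈ E, ¬ (P g.1.1 ↔ P g.1.2) := by
  by_contra! hE
  suffices P y from hy this
  clear hy
  induction h with
  | refl => exact hx
  | tail _ hbc ih =>
    obtain ⟨f, hf, hfbc | hfbc⟩ := hbc <;> have := hE f hf <;> simp only [hfbc] at this
    exacts [this.1 ih, this.2 ih]

lemma connL_filter_reachL (c : ℕ) :
    connL (V.filter (reachL E c)) (E.filter fun h => reachL E c h.1.1) := by
  have hclass : ∀ {z}, reachL E c z → reachL (E.filter fun h => reachL E c h.1.1) c z := by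
    intro z h
    induction h with
    | refl => exact .refl
    | @tail a b hca hab ih =>
      obtain ⟨f, hf, hfab⟩ := hab
      have hf1 : reachL E c f.1.1 := by
        rcases hfab with hfab | hfab
        · rwa [hfab]
        · exact hca.tail ⟨f, hf, Or.inr (by rw [hfab])⟩
      exact ih.tail ⟨f, Finset.mem_filter.2 ⟨hf, hf1⟩, hfab⟩
  intro u hu v hv
  exact (reachL_symm (hclass (Finset.mem_filter.1 hu).2)).trans (hclass (Finset.mem_filter.1 hv).2)

lemma filter_reachL_endpoints (hend : ∀ h ∈ E, h.1.1 ∈ V ∧ h.1.2 ∈ V) (c : ℕ) :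
    ∀ h ∈ E.filter (fun h => reachL E c h.1.1),
      h.1.1 ∈ V.filter (reachL E c) ∧ h.1.2 ∈ V.filter (reachL E c) := by
  intro h hh
  obtain ⟨hh, hc⟩ := Finset.mem_filter.1 hh
  exact ⟨Finset.mem_filter.2 ⟨(hend h hh).1, hc⟩,
    Finset.mem_filter.2 ⟨(hend h hh).2, hc.tail ⟨h, hh, Or.inl rfl⟩⟩⟩

def IsAcyclicL (E : Finset LEdge) : Prop := ∀ e ∈ E, ¬ reachL (E.erase e) e.1.1 e.1.2

lemma IsAcyclicL.anti {E' : Finset LEdge} (hE : E' ⊆ E) (h : IsAcyclicL E) : IsAcyclicL E' :=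
  fun e he hr => h e (hE he) (reachL_mono (Finset.erase_subset_erase e hE) hr)

/-- Deleting an edge `e` of a connected acyclic graph leaves exactly the two components of
the endpoints of `e`, to which the induction hypothesis applies. -/
theorem IsAcyclicL.card_add_one (hV : V.Nonempty) (hend : ∀ e ∈ E, e.1.1 ∈ V ∧ e.1.2 ∈ V)
    (hconn : connL V E) (hac : IsAcyclicL E) : E.card + 1 = V.card := by
  induction E using Finset.strongInductionOn generalizing V with
  | _ E ih =>
    rcases E.eq_empty_or_nonempty with rfl | ⟨e, he⟩
    · have : V.card ≤ 1 := Finset.card_le_one.2 fun u hu v hv => reachL_empty (hconn u hu v hv)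
      have := hV.card_pos
      simp only [Finset.card_empty]
      omega
    set E' := E.erase e
    have hbr := hac e he
    have hend' : ∀ h ∈ E', h.1.1 ∈ V ∧ h.1.2 ∈ V := fun h hh => hend h (Finset.mem_of_mem_erase hh)
    have hcover : ∀ x ∈ V, reachL E' e.1.1 x ∨ reachL E' e.1.2 x := fun x hx =>
      (hconn.reachL_erase_endpoint (hend e he).1 hx).imp reachL_symm reachL_symm
    have hsub : ∀ c, E'.filter (fun h => reachL E' c h.1.1) ⊂ E := fun c =>
      (Finset.filter_subset _ _).trans_ssubset (Finset.erase_ssubset he)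
    have hpart : ∀ c ∈ V, (E'.filter fun h => reachL E' c h.1.1).card + 1
        = (V.filter fun x => reachL E' c x).card := fun c hc =>
      ih _ (hsub c) ⟨c, Finset.mem_filter.2 ⟨hc, .refl⟩⟩ (filter_reachL_endpoints hend' c)
        (connL_filter_reachL c) (hac.anti (hsub c).subset)
    have hsplit : ∀ {α : Type} (s : Finset α) (π : α → ℕ), (∀ a ∈ s, π a ∈ V) →
        (s.filter fun a => reachL E' e.1.1 (π a)).card
          + (s.filter fun a => reachL E' e.1.2 (π a)).card = s.card := by
      intro α s π hπ
      rw [← Finset.card_union_of_disjoint]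
      · congr 1
        ext a
        simp only [Finset.mem_union, Finset.mem_filter]
        exact ⟨fun h => h.elim (·.1) (·.1), fun ha => (hcover _ (hπ a ha)).imp (⟨ha, ·⟩) (⟨ha, ·⟩)⟩
      · exact Finset.disjoint_filter.2 fun a _ h1 h2 => hbr (h1.trans (reachL_symm h2))
    have hV' := hsplit V (fun a => a) fun a ha => ha
    have hE' := hsplit E' (·.1.1) fun h hh => (hend' h hh).1
    have := hpart _ (hend e he).1
    have := hpart _ (hend e he).2
    have : E'.card + 1 = E.card := Finset.card_erase_add_one he
    beta_reduce at hV'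
    omega

lemma exists_subset_connL_isAcyclicL (hconn : connL V A) :
    ∃ T ⊆ A, connL V T ∧ IsAcyclicL T := by
  obtain ⟨T, hT, hmin⟩ := Finset.exists_min_image (A.powerset.filter (connL V)) Finset.card
    ⟨A, Finset.mem_filter.2 ⟨Finset.mem_powerset_self A, hconn⟩⟩
  obtain ⟨hTA, hTconn⟩ := Finset.mem_filter.1 hT
  refine ⟨T, Finset.mem_powerset.1 hTA, hTconn, fun e he hr => ?_⟩
  have := hmin (T.erase e) (Finset.mem_filter.2 ⟨Finset.mem_powerset.2
    ((Finset.erase_subset e T).trans (Finset.mem_powerset.1 hTA)),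
    fun a ha b hb => reachL_of_reachL_erase subset_rfl hr (hTconn a ha b hb)⟩)
  have := Finset.card_erase_add_one he
  omega

lemma sum_connL_eq_zero {M : Type*} [AddCommMonoid M] (h : ¬ connL V E) (φ : Finset LEdge → M) :
    ∑ A ∈ E.powerset.filter (fun A => connL V A), φ A = 0 :=
  Finset.sum_eq_zero fun _ hA => absurd (connL_mono (Finset.mem_powerset.1
    (Finset.mem_filter.1 hA).1) (Finset.mem_filter.1 hA).2) h

lemma connL.card_le (hV : V.Nonempty) (hend : ∀ e ∈ E, e.1.1 ∈ V ∧ e.1.2 ∈ V)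
    (hconn : connL V E) : V.card ≤ E.card + 1 := by
  obtain ⟨T, hTE, hTconn, hTac⟩ := exists_subset_connL_isAcyclicL hconn
  rw [← hTac.card_add_one hV (fun e he => hend e (hTE he)) hTconn]
  exact Nat.add_le_add_right (Finset.card_le_card hTE) 1

lemma exists_isLTree_subset (hV : V.Nonempty) (hend : ∀ e ∈ A, e.1.1 ∈ V ∧ e.1.2 ∈ V)
    (hconn : connL V A) : ∃ T ⊆ A, IsLTree V T := by
  obtain ⟨T, hTA, hTconn, hTac⟩ := exists_subset_connL_isAcyclicL hconn
  exact ⟨T, hTA, hTconn, hTac.card_add_one hV (fun e he => hend e (hTA he)) hTconn⟩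

lemma IsLTree.isAcyclicL (hend : ∀ e ∈ T, e.1.1 ∈ V ∧ e.1.2 ∈ V) (hT : IsLTree V T) :
    IsAcyclicL T := by
  intro e he hr
  have hle := connL.card_le (E := T.erase e) ⟨_, (hend e he).1⟩
    (fun f hf => hend f (Finset.mem_of_mem_erase hf))
    (fun a ha b hb => reachL_of_reachL_erase subset_rfl hr (hT.1 a ha b hb))
  have := Finset.card_erase_add_one he
  have := hT.2
  omega

end LabelledGraphs

section SpanningTrees

variable {V : Finset ℕ} {E A T : Finset LEdge} {f g : LEdge} {x y : ℕ}

lemma IsLTree.insert_erase (hend : ∀ e ∈ T, e.1.1 ∈ V ∧ e.1.2 ∈ V) (hT : IsLTree V T)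
    (hf : f ∉ T) (hf1 : f.1.1 ∈ V) (hf2 : f.1.2 ∈ V) (hg : g ∈ T)
    (hcut : ¬ reachL (T.erase g) f.1.1 f.1.2) : IsLTree V (insert f (T.erase g)) := by
  have hsub : T.erase g ⊆ insert f (T.erase g) := Finset.subset_insert _ _
  have hf' : reachL (insert f (T.erase g)) f.1.1 f.1.2 := reachL_of_mem (Finset.mem_insert_self _ _)
  have hanchor := fun x (hx : x ∈ V) => hT.1.reachL_erase_endpoint (e := g) (hend g hg).1 hx
  -- the endpoints of `f` hang off different endpoints of `g`, so `f` reconnects them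
  have hgg : reachL (insert f (T.erase g)) g.1.1 g.1.2 := by
    rcases hanchor _ hf1 with h1 | h1 <;> rcases hanchor _ hf2 with h2 | h2
    · exact absurd (h1.trans (reachL_symm h2)) hcut
    · exact ((reachL_symm (reachL_mono hsub h1)).trans hf').trans (reachL_mono hsub h2)
    · exact ((reachL_symm (reachL_mono hsub h2)).trans (reachL_symm hf')).trans
        (reachL_mono hsub h1)
    · exact absurd (h1.trans (reachL_symm h2)) hcut
  refine ⟨fun a ha b hb => reachL_of_reachL_erase hsub hgg (hT.1 a ha b hb), ?_⟩
  rw [Finset.card_insert_of_notMem fun h => hf (Finset.mem_of_mem_erase h)]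
  have := Finset.card_erase_add_one hg
  have := hT.2
  omega

lemma IsLTree.exists_path (hend : ∀ e ∈ T, e.1.1 ∈ V ∧ e.1.2 ∈ V) (hT : IsLTree V T)
    (hx : x ∈ V) (hy : y ∈ V) :
    ∃ W ⊆ T, reachL W x y ∧ ∀ g ∈ W, ¬ reachL (T.erase g) x y := by
  obtain ⟨W, hW, hmin⟩ := Finset.exists_min_image (T.powerset.filter (reachL · x y)) Finset.card
    ⟨T, Finset.mem_filter.2 ⟨Finset.mem_powerset_self T, hT.1 x hx y hy⟩⟩
  obtain ⟨hWT, hWxy⟩ := Finset.mem_filter.1 hW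
  rw [Finset.mem_powerset] at hWT
  refine ⟨W, hWT, hWxy, fun g hg hr => ?_⟩
  have hshort : ¬ reachL (W.erase g) x y := fun h => by
    have := hmin (W.erase g) (Finset.mem_filter.2
      ⟨Finset.mem_powerset.2 ((Finset.erase_subset g W).trans hWT), h⟩)
    have := Finset.card_erase_add_one hg
    omega
  have hWg : W.erase g ⊆ T.erase g := Finset.erase_subset_erase g hWT
  have hbr := hT.isAcyclicL hend g (hWT hg)
  have hxg := (reachL_erase_or (e := g) hWxy).resolve_left hshort
  have hyg := (reachL_erase_or (e := g) (reachL_symm hWxy)).resolve_left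
    fun h => hshort (reachL_symm h)
  rcases hxg with hx' | hx' <;> rcases hyg with hy' | hy'
  · exact hshort (hx'.trans (reachL_symm hy'))
  · exact hbr (((reachL_symm (reachL_mono hWg hx')).trans hr).trans (reachL_mono hWg hy'))
  · exact hbr (((reachL_symm (reachL_mono hWg hy')).trans (reachL_symm hr)).trans
      (reachL_mono hWg hx'))
  · exact hshort (hx'.trans (reachL_symm hy'))

def IsActiveTree (V : Finset ℕ) (ω : LEdge → ℝ) (A T : Finset LEdge) : Prop :=
  T ⊆ A ∧ IsLTree V T ∧ ∀ f ∈ A \ T, extActiveL T ω f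

variable {ω : LEdge → ℝ}

/-- An edge `e` of `T₁ \ T₂` and an edge `g` of the `T₂`-path joining its endpoints that
crosses the cut of `e` in `T₁` would each have to be lighter than the other. -/
lemma IsActiveTree.subset {T₁ T₂ : Finset LEdge} (hend : ∀ e ∈ A, e.1.1 ∈ V ∧ e.1.2 ∈ V)
    (h₁ : IsActiveTree V ω A T₁) (h₂ : IsActiveTree V ω A T₂) : T₁ ⊆ T₂ := by
  intro e he
  by_contra heT₂
  obtain ⟨h₁A, h₁T, h₁act⟩ := h₁
  obtain ⟨h₂A, h₂T, h₂act⟩ := h₂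
  have hend₁ : ∀ f ∈ T₁, f.1.1 ∈ V ∧ f.1.2 ∈ V := fun f hf => hend f (h₁A hf)
  have hend₂ : ∀ f ∈ T₂, f.1.1 ∈ V ∧ f.1.2 ∈ V := fun f hf => hend f (h₂A hf)
  have hbr := h₁T.isAcyclicL hend₁ e he
  obtain ⟨W, hWT, hWe, hWess⟩ := h₂T.exists_path hend₂ (hend₁ e he).1 (hend₁ e he).2
  obtain ⟨g, hgW, hgcross⟩ := exists_mem_not_iff_of_reachL
    (P := reachL (T₁.erase e) e.1.1) hWe .refl hbr
  have hgcut : ¬ reachL (T₁.erase e) g.1.1 g.1.2 := fun hr =>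
    hgcross ⟨(·.trans hr), (·.trans (reachL_symm hr))⟩
  have hgT₁ : g ∉ T₁ := fun hg => hgcut (reachL_of_mem (Finset.mem_erase.2
    ⟨fun hge => heT₂ (hge ▸ hWT hgW), hg⟩))
  have hge := (h₁act g (Finset.mem_sdiff.2 ⟨h₂A (hWT hgW), hgT₁⟩)).2.2 e he hgcut
  have heg := (h₂act e (Finset.mem_sdiff.2 ⟨h₁A he, heT₂⟩)).2.2 g (hWT hgW) (hWess g hgW)
  linarith

lemma IsActiveTree.unique {T₁ T₂ : Finset LEdge} (hend : ∀ e ∈ A, e.1.1 ∈ V ∧ e.1.2 ∈ V)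
    (h₁ : IsActiveTree V ω A T₁) (h₂ : IsActiveTree V ω A T₂) : T₁ = T₂ :=
  (h₁.subset hend h₂).antisymm (h₂.subset hend h₁)

/-- The maximum-weight spanning tree of `A` is active: a heavier edge on the cycle of an
outside edge could be exchanged for it. -/
lemma exists_isActiveTree (hV : V.Nonempty) (hend : ∀ e ∈ A, e.1.1 ∈ V ∧ e.1.2 ∈ V)
    (hω : Function.Injective ω) (hconn : connL V A) : ∃ T, IsActiveTree V ω A T := by
  obtain ⟨T₀, hT₀A, hT₀⟩ := exists_isLTree_subset hV hend hconn
  obtain ⟨T, hT, hmax⟩ := Finset.exists_max_image (A.powerset.filter (IsLTree V))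
    (fun T => ∑ e ∈ T, ω e) ⟨T₀, Finset.mem_filter.2 ⟨Finset.mem_powerset.2 hT₀A, hT₀⟩⟩
  obtain ⟨hTA, hTtree⟩ := Finset.mem_filter.1 hT
  rw [Finset.mem_powerset] at hTA
  refine ⟨T, hTA, hTtree, fun f hf => ?_⟩
  obtain ⟨hfA, hfT⟩ := Finset.mem_sdiff.1 hf
  refine ⟨hfT, hTtree.1 _ (hend f hfA).1 _ (hend f hfA).2, fun g hg hcut => ?_⟩
  by_contra! hle
  have hlt : ω g < ω f := hle.lt_of_ne fun h => hfT (hω h ▸ hg)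
  have hexch := hmax _ (Finset.mem_filter.2 ⟨Finset.mem_powerset.2
    (Finset.insert_subset hfA ((Finset.erase_subset g T).trans hTA)),
    hTtree.insert_erase (fun e he => hend e (hTA he)) hfT (hend f hfA).1 (hend f hfA).2 hg hcut⟩)
  rw [Finset.sum_insert fun h => hfT (Finset.mem_of_mem_erase h)] at hexch
  have := Finset.sum_erase_add T ω hg
  linarith

lemma pow_card_eq_sum_powerset {R α : Type*} [CommRing R] (y : R) (s : Finset α) :
    y ^ s.card = ∑ X ∈ s.powerset, (y - 1) ^ X.card := by
  simpa using (Finset.sum_pow_mul_eq_add_pow (y - 1) 1 s).symm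

lemma disjoint_of_subset_filter_extActiveL {X : Finset LEdge}
    (hX : X ⊆ E.filter (extActiveL T ω)) : Disjoint T X :=
  Finset.disjoint_right.2 fun _ hf => (Finset.mem_filter.1 (hX hf)).2.1

lemma IsLTree.isActiveTree_union {X : Finset LEdge} (hT : IsLTree V T)
    (hX : X ⊆ E.filter (extActiveL T ω)) : IsActiveTree V ω (T ∪ X) T := by
  refine ⟨Finset.subset_union_left, hT, fun f hf => ?_⟩
  rw [Finset.union_sdiff_left] at hf
  exact (Finset.mem_filter.1 (hX (Finset.mem_sdiff.1 hf).1)).2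

theorem sum_isLTree_pow_eaL (hV : V.Nonempty) (hend : ∀ e ∈ E, e.1.1 ∈ V ∧ e.1.2 ∈ V)
    (hω : Function.Injective ω) (y : ℤ) :
    ∑ T ∈ E.powerset.filter (fun T => IsLTree V T), y ^ eaL E T ω
      = ∑ A ∈ E.powerset.filter (fun A => connL V A), (y - 1) ^ (A.card + 1 - V.card) := by
  simp only [eaL, pow_card_eq_sum_powerset y]
  rw [Finset.sum_sigma']
  have hmem : ∀ {T X : Finset LEdge}, (⟨T, X⟩ : Σ _ : Finset LEdge, Finset LEdge) ∈
      (E.powerset.filter fun T => IsLTree V T).sigma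
        (fun T => (E.filter (extActiveL T ω)).powerset) ↔
      (T ⊆ E ∧ IsLTree V T) ∧ X ⊆ E.filter (extActiveL T ω) := by
    intro T X
    simp only [Finset.mem_sigma, Finset.mem_filter, Finset.mem_powerset]
  refine Finset.sum_bij (fun p _ => p.1 ∪ p.2) ?_ ?_ ?_ ?_
  · rintro ⟨T, X⟩ hp
    obtain ⟨⟨hTE, hT⟩, hX⟩ := hmem.1 hp
    exact Finset.mem_filter.2 ⟨Finset.mem_powerset.2 (Finset.union_subset hTE
      (hX.trans (Finset.filter_subset _ _))), connL_mono Finset.subset_union_left hT.1⟩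
  · rintro ⟨T₁, X₁⟩ hp₁ ⟨T₂, X₂⟩ hp₂ (h : T₁ ∪ X₁ = T₂ ∪ X₂)
    obtain ⟨⟨hT₁E, hT₁⟩, hX₁⟩ := hmem.1 hp₁
    obtain ⟨⟨-, hT₂⟩, hX₂⟩ := hmem.1 hp₂
    have hend' : ∀ e ∈ T₁ ∪ X₁, e.1.1 ∈ V ∧ e.1.2 ∈ V := fun e he =>
      hend e (Finset.union_subset hT₁E (hX₁.trans (Finset.filter_subset _ _)) he)
    have hT : T₁ = T₂ := (hT₁.isActiveTree_union hX₁).unique hend' (h ▸ hT₂.isActiveTree_union hX₂)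
    subst hT
    have hX : X₁ = X₂ := by
      rw [← (disjoint_of_subset_filter_extActiveL hX₁).sdiff_eq_right,
        ← (disjoint_of_subset_filter_extActiveL hX₂).sdiff_eq_right, ← Finset.union_sdiff_left,
        h, Finset.union_sdiff_left]
    rw [hX]
  · intro A hA
    obtain ⟨hAE, hA⟩ := Finset.mem_filter.1 hA
    rw [Finset.mem_powerset] at hAE
    have hendA : ∀ e ∈ A, e.1.1 ∈ V ∧ e.1.2 ∈ V := fun e he => hend e (hAE he)
    obtain ⟨T, hTA, hT, hact⟩ := exists_isActiveTree hV hendA hω hA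
    refine ⟨⟨T, A \ T⟩, hmem.2 ⟨⟨hTA.trans hAE, hT⟩, fun f hf => Finset.mem_filter.2
      ⟨hAE (Finset.mem_sdiff.1 hf).1, hact f hf⟩⟩, Finset.union_sdiff_of_subset hTA⟩
  · rintro ⟨T, X⟩ hp
    obtain ⟨⟨-, hT⟩, hX⟩ := hmem.1 hp
    show (y - 1) ^ X.card = (y - 1) ^ ((T ∪ X).card + 1 - V.card)
    rw [Finset.card_union_of_disjoint (disjoint_of_subset_filter_extActiveL hX), ← hT.2]
    congr 1
    omega

end SpanningTrees

section ComponentwiseFlip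

lemma flipMap_orderIsoOfFin (C : Finset ℕ) (i : Fin C.card) :
    flipMap C (C.orderIsoOfFin rfl i) = C.orderIsoOfFin rfl i.rev := by
  rw [flipMap, dif_pos (C.orderIsoOfFin rfl i).2]
  congr 2
  ext
  simp only [Subtype.coe_eta, OrderIso.symm_apply_apply, Fin.val_rev]
  omega

lemma exists_orderIsoOfFin_eq {C : Finset ℕ} {x : ℕ} (hx : x ∈ C) :
    ∃ i, (C.orderIsoOfFin rfl i : ℕ) = x :=
  ⟨(C.orderIsoOfFin rfl).symm ⟨x, hx⟩, by simp⟩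

lemma flipMap_mem {C : Finset ℕ} {x : ℕ} (hx : x ∈ C) : flipMap C x ∈ C := by
  obtain ⟨i, rfl⟩ := exists_orderIsoOfFin_eq hx
  rw [flipMap_orderIsoOfFin]
  exact Subtype.prop _

lemma flipMap_flipMap {C : Finset ℕ} {x : ℕ} (hx : x ∈ C) : flipMap C (flipMap C x) = x := by
  obtain ⟨i, rfl⟩ := exists_orderIsoOfFin_eq hx
  rw [flipMap_orderIsoOfFin, flipMap_orderIsoOfFin, Fin.rev_rev]

lemma flipMap_lt_flipMap {C : Finset ℕ} {x y : ℕ} (hx : x ∈ C) (hy : y ∈ C) (h : x < y) :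
    flipMap C y < flipMap C x := by
  obtain ⟨i, rfl⟩ := exists_orderIsoOfFin_eq hx
  obtain ⟨j, rfl⟩ := exists_orderIsoOfFin_eq hy
  rw [flipMap_orderIsoOfFin, flipMap_orderIsoOfFin]
  exact (C.orderIsoOfFin rfl).lt_iff_lt.2
    (Fin.rev_lt_rev.2 ((C.orderIsoOfFin rfl).lt_iff_lt.1 h))

lemma mem_ctE2 {A B : Finset ℕ} {e : PEdge} : e ∈ ctE2 A B ↔ e.1 ∈ A ∧ e.2 ∈ B ∧ e.1 < e.2 := by
  rw [ctE2, Finset.mem_filter, Finset.mem_product, and_assoc]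

variable {U S : Finset ℕ} {F : Finset PEdge} {x y v w : ℕ}

lemma ctE2_endpoints (hSU : S ⊆ U) {e : PEdge} (he : e ∈ ctE2 S (U \ S)) : e.1 ∈ U ∧ e.2 ∈ U :=
  have ⟨h₁, h₂, _⟩ := mem_ctE2.1 he
  ⟨hSU h₁, (Finset.mem_sdiff.1 h₂).1⟩

lemma reachP_symm (h : reachP F x y) : reachP F y x :=
  Relation.ReflTransGen.mono (fun _ _ => Or.symm) _ _ (Relation.reflTransGen_swap.2 h)

lemma reachP_of_mem {e : PEdge} (he : e ∈ F) : reachP F e.1 e.2 :=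
  Relation.ReflTransGen.single (Or.inl he)

lemma mem_comp : y ∈ comp U F x ↔ y ∈ U ∧ reachP F x y := Finset.mem_filter

lemma comp_eq_of_reachP (h : reachP F x y) : comp U F x = comp U F y := by
  ext z
  simp only [mem_comp]
  exact and_congr_right fun _ => ⟨(reachP_symm h).trans, h.trans⟩

lemma reachP_of_mem_comp (hv : v ∈ comp U F x) (hw : w ∈ comp U F x) : reachP F v w :=
  (reachP_symm (mem_comp.1 hv).2).trans (mem_comp.1 hw).2

def compFlip (U : Finset ℕ) (F : Finset PEdge) (v : ℕ) : ℕ := flipMap (comp U F v) v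

/-- An edge `(a, b)` with `a < b` becomes `(compFlip b, compFlip a)`, again increasing since
`compFlip` reverses the order within a component. -/
def flipEdges (U : Finset ℕ) (F : Finset PEdge) : Finset PEdge :=
  F.image fun e => (compFlip U F e.2, compFlip U F e.1)

def flipTier (U : Finset ℕ) (F : Finset PEdge) (S : Finset ℕ) : Finset ℕ :=
  U.filter fun v => compFlip U F v ∉ S

lemma compFlip_mem_comp (hv : v ∈ U) : compFlip U F v ∈ comp U F v :=
  flipMap_mem (mem_comp.2 ⟨hv, .refl⟩)

lemma compFlip_mem (hv : v ∈ U) : compFlip U F v ∈ U := (mem_comp.1 (compFlip_mem_comp hv)).1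

lemma compFlip_compFlip (hv : v ∈ U) : compFlip U F (compFlip U F v) = v := by
  have hφ := compFlip_mem_comp (F := F) hv
  rw [compFlip, ← comp_eq_of_reachP (mem_comp.1 hφ).2]
  exact flipMap_flipMap (mem_comp.2 ⟨hv, .refl⟩)

lemma reachP_compFlip (hv : v ∈ U) (hw : w ∈ U) (h : reachP F v w) :
    reachP F (compFlip U F v) (compFlip U F w) :=
  reachP_of_mem_comp (compFlip_mem_comp hv)
    ((comp_eq_of_reachP h).symm ▸ compFlip_mem_comp (F := F) hw)

lemma reachP_flipEdges_compFlip (h : reachP F x y) :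
    reachP (flipEdges U F) (compFlip U F x) (compFlip U F y) := by
  refine Relation.ReflTransGen.lift (compFlip U F) (fun a b hab => ?_) _ _ h
  rcases hab with hab | hab
  exacts [Or.inr (Finset.mem_image.2 ⟨_, hab, rfl⟩), Or.inl (Finset.mem_image.2 ⟨_, hab, rfl⟩)]

lemma flipEdges_subset_ctE2 (hSU : S ⊆ U) (hF : F ⊆ ctE2 S (U \ S)) :
    flipEdges U F ⊆ ctE2 (flipTier U F S) (U \ flipTier U F S) := by
  intro f hf
  obtain ⟨e, he, rfl⟩ := Finset.mem_image.1 hf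
  obtain ⟨he₁, he₂, hlt⟩ := mem_ctE2.1 (hF he)
  have hU₁ := hSU he₁
  have ⟨hU₂, he₂⟩ := Finset.mem_sdiff.1 he₂
  refine mem_ctE2.2 ⟨?_, Finset.mem_sdiff.2 ⟨compFlip_mem hU₁, ?_⟩, ?_⟩
  · exact Finset.mem_filter.2 ⟨compFlip_mem hU₂, by rwa [compFlip_compFlip hU₂]⟩
  · rw [flipTier, Finset.mem_filter, compFlip_compFlip hU₁]
    exact fun h => h.2 he₁
  · have hcomp := comp_eq_of_reachP (U := U) (reachP_of_mem he)
    rw [compFlip, compFlip, ← hcomp]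
    exact flipMap_lt_flipMap (mem_comp.2 ⟨hU₁, .refl⟩)
      (hcomp ▸ mem_comp.2 ⟨hU₂, .refl⟩) hlt

lemma flipTier_eq_sdiff (hSU : S ⊆ U) : flipTier U F S = U \ S.image (compFlip U F) := by
  ext v
  simp only [flipTier, Finset.mem_filter, Finset.mem_sdiff, Finset.mem_image]
  refine and_congr_right fun hv => not_congr ⟨fun h => ⟨_, h, compFlip_compFlip hv⟩, ?_⟩
  rintro ⟨s, hs, rfl⟩
  rwa [compFlip_compFlip (hSU hs)]

lemma card_flipTier (hSU : S ⊆ U) : (flipTier U F S).card = U.card - S.card := by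
  have hinj : Set.InjOn (compFlip U F) S := fun a ha b hb hab => by
    rw [← compFlip_compFlip (F := F) (hSU ha), hab, compFlip_compFlip (hSU hb)]
  rw [flipTier_eq_sdiff hSU, Finset.card_sdiff_of_subset, Finset.card_image_of_injOn hinj]
  rintro _ hv
  obtain ⟨s, hs, rfl⟩ := Finset.mem_image.1 hv
  exact compFlip_mem (hSU hs)

variable (hFU : ∀ e ∈ F, e.1 ∈ U ∧ e.2 ∈ U)
include hFU

lemma flipEdges_endpoints : ∀ e ∈ flipEdges U F, e.1 ∈ U ∧ e.2 ∈ U := by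
  intro e he
  obtain ⟨e, he', rfl⟩ := Finset.mem_image.1 he
  exact ⟨compFlip_mem (hFU e he').2, compFlip_mem (hFU e he').1⟩

lemma reachP_of_reachP_flipEdges (h : reachP (flipEdges U F) x y) : reachP F x y := by
  have hedge : ∀ e ∈ flipEdges U F, reachP F e.1 e.2 := by
    intro e he
    obtain ⟨e, he', rfl⟩ := Finset.mem_image.1 he
    have h₁ := compFlip_mem_comp (F := F) (hFU e he').1
    rw [comp_eq_of_reachP (reachP_of_mem he')] at h₁
    exact reachP_of_mem_comp (compFlip_mem_comp (hFU e he').2) h₁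
  refine Relation.reflTransGen_closed (fun a b hab => ?_) _ _ h
  rcases hab with hab | hab
  exacts [hedge _ hab, reachP_symm (hedge _ hab)]

lemma comp_flipEdges (hv : v ∈ U) : comp U (flipEdges U F) v = comp U F v := by
  ext w
  simp only [mem_comp]
  refine and_congr_right fun hw => ⟨reachP_of_reachP_flipEdges hFU, fun h => ?_⟩
  have := reachP_flipEdges_compFlip (U := U) (reachP_compFlip hv hw h)
  rwa [compFlip_compFlip hv, compFlip_compFlip hw] at this

lemma compFlip_flipEdges (hv : v ∈ U) : compFlip U (flipEdges U F) v = compFlip U F v := by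
  rw [compFlip, comp_flipEdges hFU hv, compFlip]

lemma flipEdges_flipEdges : flipEdges U (flipEdges U F) = F := by
  have hφ : flipEdges U (flipEdges U F)
      = (flipEdges U F).image fun e => (compFlip U F e.2, compFlip U F e.1) :=
    Finset.image_congr fun e he => by
      have ⟨h₁, h₂⟩ := flipEdges_endpoints hFU e he
      simp only [compFlip_flipEdges hFU h₁, compFlip_flipEdges hFU h₂]
  rw [hφ, flipEdges, Finset.image_image]
  conv_rhs => rw [← Finset.image_id (s := F)]
  refine Finset.image_congr fun e he => ?_
  have ⟨h₁, h₂⟩ := hFU e he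
  simp only [Function.comp, id, compFlip_compFlip h₁, compFlip_compFlip h₂]

lemma card_flipEdges : (flipEdges U F).card = F.card := by
  refine le_antisymm Finset.card_image_le ?_
  conv_lhs => rw [← flipEdges_flipEdges hFU]
  exact Finset.card_image_le

lemma flipTier_flipTier (hSU : S ⊆ U) : flipTier U (flipEdges U F) (flipTier U F S) = S := by
  ext v
  simp only [flipTier, Finset.mem_filter, not_and, not_not]
  constructor
  · rintro ⟨hv, h⟩
    rw [compFlip_flipEdges hFU hv] at h
    simpa only [compFlip_compFlip hv] using h (compFlip_mem hv)
  · intro hv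
    refine ⟨hSU hv, ?_⟩
    rw [compFlip_flipEdges hFU (hSU hv), compFlip_compFlip (hSU hv)]
    exact fun _ => hv

end ComponentwiseFlip

section DualTree

/-- The edges of `A` that come from the complete tiered graph: those labelled `0` in `qE`. -/
def zeroPart (A : Finset LEdge) : Finset PEdge := (A.filter fun e => e.2 = 0).image Prod.fst

def dualEdges (U : Finset ℕ) (A : Finset LEdge) : Finset LEdge :=
  A.filter (fun e => e.2 ≠ 0) ∪ (flipEdges U (zeroPart A)).image fun p => (p, 0)

lemma dualTree_eq (U S : Finset ℕ) (A : Finset LEdge) :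
    dualTree U (S, A) = (flipTier U (zeroPart A) S, dualEdges U A) := by
  refine Prod.ext (Finset.filter_congr fun v hv => ?_) ?_
  · simp only [cdual, hv, if_true, compFlip, zeroPart]
    split_ifs <;> simp_all
  · simp only [dualTree, dualEdges, cdual, zeroPart]
    congr 2
    refine Finset.image_congr fun e he => ?_
    simp only [compFlip, comp_eq_of_reachP (U := U) (reachP_of_mem (Finset.mem_coe.1 he))]

variable {P A : Finset LEdge} {Z : Finset PEdge}

lemma filter_union_image_zero (hP : ∀ e ∈ P, e.2 ≠ 0) :
    (P ∪ Z.image fun p => (p, 0)).filter (fun e => e.2 ≠ 0) = P := by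
  ext e
  simp only [Finset.mem_filter, Finset.mem_union, Finset.mem_image]
  constructor
  · rintro ⟨he | ⟨p, -, rfl⟩, h⟩
    exacts [he, absurd rfl h]
  · exact fun he => ⟨Or.inl he, hP e he⟩

lemma zeroPart_union_image_zero (hP : ∀ e ∈ P, e.2 ≠ 0) :
    zeroPart (P ∪ Z.image fun p => (p, 0)) = Z := by
  ext p
  simp only [zeroPart, Finset.mem_image, Finset.mem_filter, Finset.mem_union]
  constructor
  · rintro ⟨e, ⟨he | ⟨q, hq, rfl⟩, h⟩, rfl⟩
    exacts [absurd h (hP e he), hq]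
  · exact fun hp => ⟨(p, 0), ⟨Or.inr ⟨p, hp, rfl⟩, rfl⟩, rfl⟩

lemma card_union_image_zero (hP : ∀ e ∈ P, e.2 ≠ 0) :
    (P ∪ Z.image fun p => (p, 0)).card = P.card + Z.card := by
  rw [Finset.card_union_of_disjoint,
    Finset.card_image_of_injective _ fun p q h => congrArg Prod.fst h]
  exact Finset.disjoint_right.2 fun e he hP' => by
    obtain ⟨p, -, rfl⟩ := Finset.mem_image.1 he
    exact hP _ hP' rfl

lemma filter_union_zeroPart (A : Finset LEdge) :
    A.filter (fun e => e.2 ≠ 0) ∪ (zeroPart A).image (fun p => (p, 0)) = A := by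
  ext e
  simp only [zeroPart, Finset.mem_union, Finset.mem_filter, Finset.mem_image]
  constructor
  · rintro (⟨he, -⟩ | ⟨p, ⟨f, ⟨hf, hf0⟩, rfl⟩, rfl⟩)
    exacts [he, by rwa [← hf0]]
  · intro he
    by_cases h : e.2 = 0
    · exact Or.inr ⟨e.1, ⟨e, ⟨he, h⟩, rfl⟩, by rw [← h]⟩
    · exact Or.inl ⟨he, h⟩

lemma mem_filter_ne_zero {A : Finset LEdge} : ∀ e ∈ A.filter (fun e => e.2 ≠ 0), e.2 ≠ 0 :=
  fun _ he => (Finset.mem_filter.1 he).2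

variable {U S : Finset ℕ} {EH : Finset LEdge}

lemma zeroPart_dualEdges : zeroPart (dualEdges U A) = flipEdges U (zeroPart A) :=
  zeroPart_union_image_zero mem_filter_ne_zero

lemma filter_dualEdges : (dualEdges U A).filter (fun e => e.2 ≠ 0) = A.filter (fun e => e.2 ≠ 0) :=
  filter_union_image_zero mem_filter_ne_zero

lemma mem_qE {e : LEdge} : e ∈ qE U EH S ↔ e ∈ EH ∨ (e.1 ∈ ctE2 S (U \ S) ∧ e.2 = 0) := by
  simp only [qE, Finset.mem_union, Finset.mem_image]
  exact or_congr_right ⟨fun ⟨p, hp, h⟩ => h ▸ ⟨hp, rfl⟩, fun ⟨hp, h⟩ => ⟨e.1, hp, by rw [← h]⟩⟩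

lemma zeroPart_subset_ctE2 (hEH : ∀ e ∈ EH, e.2 ≠ 0) (hA : A ⊆ qE U EH S) :
    zeroPart A ⊆ ctE2 S (U \ S) := by
  intro p hp
  obtain ⟨e, he, rfl⟩ := Finset.mem_image.1 hp
  obtain ⟨heA, he0⟩ := Finset.mem_filter.1 he
  exact ((mem_qE.1 (hA heA)).resolve_left fun h => hEH e h he0).1

lemma qE_endpoints {VH : Finset ℕ} (hEH : ∀ e ∈ EH, e.1.1 ∈ VH ∧ e.1.2 ∈ VH) (hUV : U ⊆ VH)
    (hSU : S ⊆ U) : ∀ e ∈ qE U EH S, e.1.1 ∈ VH ∧ e.1.2 ∈ VH := fun e he =>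
  (mem_qE.1 he).elim (hEH e) fun h => (ctE2_endpoints hSU h.1).imp (hUV ·) (hUV ·)

lemma reachL_image_zero {G : Finset PEdge} {a b : ℕ} (h : reachP G a b) :
    reachL (G.image fun p => (p, 0)) a b := by
  refine Relation.ReflTransGen.mono (fun x y hxy => ?_) _ _ h
  rcases hxy with hxy | hxy
  exacts [⟨_, Finset.mem_image.2 ⟨_, hxy, rfl⟩, Or.inl rfl⟩,
    ⟨_, Finset.mem_image.2 ⟨_, hxy, rfl⟩, Or.inr rfl⟩]

lemma dualEdges_subset_qE (hEH : ∀ e ∈ EH, e.2 ≠ 0) (hSU : S ⊆ U) (hA : A ⊆ qE U EH S) :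
    dualEdges U A ⊆ qE U EH (flipTier U (zeroPart A) S) := by
  intro e he
  rcases Finset.mem_union.1 he with he | he
  · obtain ⟨heA, he0⟩ := Finset.mem_filter.1 he
    exact mem_qE.2 (Or.inl ((mem_qE.1 (hA heA)).resolve_right fun h => he0 h.2))
  · obtain ⟨p, hp, rfl⟩ := Finset.mem_image.1 he
    exact mem_qE.2 (Or.inr
      ⟨flipEdges_subset_ctE2 hSU (zeroPart_subset_ctE2 hEH hA) hp, rfl⟩)

variable (hFU : ∀ e ∈ zeroPart A, e.1 ∈ U ∧ e.2 ∈ U)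
include hFU

lemma dualEdges_dualEdges : dualEdges U (dualEdges U A) = A := by
  rw [dualEdges, filter_dualEdges, zeroPart_dualEdges,
    flipEdges_flipEdges hFU, filter_union_zeroPart]

lemma card_dualEdges : (dualEdges U A).card = A.card := by
  conv_rhs => rw [← filter_union_zeroPart A]
  rw [dualEdges, card_union_image_zero mem_filter_ne_zero,
    card_union_image_zero mem_filter_ne_zero, card_flipEdges hFU]

/-- A `Q`-edge of `A` joins two vertices of one component of `zeroPart A`, and the flip
preserves these components. -/
lemma reachL_dualEdges {x y : ℕ} (h : reachL A x y) : reachL (dualEdges U A) x y := by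
  refine Relation.reflTransGen_closed (fun a b ⟨e, he, hab⟩ => ?_) _ _ h
  have hedge : reachL (dualEdges U A) e.1.1 e.1.2 := by
    by_cases he0 : e.2 = 0
    · have hp : e.1 ∈ zeroPart A := Finset.mem_image.2 ⟨e, Finset.mem_filter.2 ⟨he, he0⟩, rfl⟩
      have hreach : e.1.2 ∈ comp U (flipEdges U (zeroPart A)) e.1.1 := by
        rw [comp_flipEdges hFU (hFU _ hp).1]
        exact mem_comp.2 ⟨(hFU _ hp).2, reachP_of_mem hp⟩
      exact reachL_mono Finset.subset_union_right (reachL_image_zero (mem_comp.1 hreach).2)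
    · exact reachL_of_mem (Finset.mem_union_left _ (Finset.mem_filter.2 ⟨he, he0⟩))
  rcases hab with hab | hab <;> simp only [hab] at hedge
  exacts [hedge, reachL_symm hedge]

end DualTree

theorem sum_connL_eq_sum_connL_card_sub {VH U : Finset ℕ} {EH : Finset LEdge}
    (hEH : ∀ e ∈ EH, e.2 ≠ 0) (φ : ℕ → ℤ) {q : ℕ} (hq : q ≤ U.card) :
    ∑ S ∈ U.powerset.filter (fun S => S.card = q),
      ∑ A ∈ (qE U EH S).powerset.filter (fun A => connL VH A), φ A.card
    = ∑ S ∈ U.powerset.filter (fun S => S.card = U.card - q),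
        ∑ A ∈ (qE U EH S).powerset.filter (fun A => connL VH A), φ A.card := by
  set pairs := fun q : ℕ => (U.powerset.filter (fun S => S.card = q)).sigma
    fun S => (qE U EH S).powerset.filter (fun A => connL VH A)
  have hmem : ∀ {q' S A}, (⟨S, A⟩ : Σ _ : Finset ℕ, Finset LEdge) ∈ pairs q' ↔
      (S ⊆ U ∧ S.card = q') ∧ A ⊆ qE U EH S ∧ connL VH A := by
    intro q' S A
    simp only [pairs, Finset.mem_sigma, Finset.mem_filter, Finset.mem_powerset]
  let dual : (Σ _ : Finset ℕ, Finset LEdge) → Σ _ : Finset ℕ, Finset LEdge :=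
    fun p => ⟨(dualTree U (p.1, p.2)).1, (dualTree U (p.1, p.2)).2⟩
  have key : ∀ {q'} p, p ∈ pairs q' →
      dual p ∈ pairs (U.card - q') ∧ dual (dual p) = p ∧ (dual p).2.card = p.2.card := by
    rintro q' ⟨S, A⟩ hp
    obtain ⟨⟨hSU, rfl⟩, hA, hconn⟩ := hmem.1 hp
    have hFU : ∀ e ∈ zeroPart A, e.1 ∈ U ∧ e.2 ∈ U := fun e he =>
      ctE2_endpoints hSU (zeroPart_subset_ctE2 hEH hA he)
    simp only [dual, dualTree_eq, zeroPart_dualEdges, flipTier_flipTier hFU hSU,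
      dualEdges_dualEdges hFU, card_dualEdges hFU, and_true]
    exact hmem.2 ⟨⟨Finset.filter_subset _ _, card_flipTier hSU⟩, dualEdges_subset_qE hEH hSU hA,
      fun a ha b hb => reachL_dualEdges hFU (hconn a ha b hb)⟩
  rw [Finset.sum_sigma', Finset.sum_sigma']
  refine Finset.sum_nbij' dual dual (fun p hp => (key p hp).1)
    (fun p hp => Nat.sub_sub_self hq ▸ (key p hp).1) (fun p hp => (key p hp).2.1)
    (fun p hp => (key p hp).2.1) (fun p hp => ?_)
  rw [(key p hp).2.2]

theorem stmt13_general (VH : Finset ℕ) (EH : Finset LEdge)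
    (hEH : ∀ e ∈ EH, e.1.1 ∈ VH ∧ e.1.2 ∈ VH ∧ e.2 ≠ 0)
    (U : Finset ℕ) (hUV : U ⊆ VH) (hUne : U.Nonempty)
    (p1 p2 : ℕ) (hp : p1 + p2 = U.card)
    (y : ℤ) (ω : LEdge → ℝ) (hω : Function.Injective ω) :
    ∑ S ∈ U.powerset.filter (fun S => S.card = p1 ∧ connL VH (qE U EH S)),
      ∑ T ∈ (qE U EH S).powerset.filter (fun T => IsLTree VH T),
        y ^ eaL (qE U EH S) T ω
    = ∑ S ∈ U.powerset.filter (fun S => S.card = p2 ∧ connL VH (qE U EH S)),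
        ∑ T ∈ (qE U EH S).powerset.filter (fun T => IsLTree VH T),
          y ^ eaL (qE U EH S) T ω := by
  have hend : ∀ S ⊆ U, ∀ e ∈ qE U EH S, e.1.1 ∈ VH ∧ e.1.2 ∈ VH := fun S hSU =>
    qE_endpoints (fun e he => ⟨(hEH e he).1, (hEH e he).2.1⟩) hUV hSU
  have hside : ∀ q, ∑ S ∈ U.powerset.filter (fun S => S.card = q ∧ connL VH (qE U EH S)),
        ∑ T ∈ (qE U EH S).powerset.filter (fun T => IsLTree VH T), y ^ eaL (qE U EH S) T ω
      = ∑ S ∈ U.powerset.filter (fun S => S.card = q),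
        ∑ A ∈ (qE U EH S).powerset.filter (fun A => connL VH A),
          (y - 1) ^ (A.card + 1 - VH.card) := by
    intro q
    rw [Finset.sum_congr rfl fun S hS => sum_isLTree_pow_eaL (hUne.mono hUV)
      (hend S (Finset.mem_powerset.1 (Finset.mem_filter.1 hS).1)) hω y, ← Finset.filter_filter]
    exact Finset.sum_filter_of_ne fun S _ hS => by_contra fun hc => hS (sum_connL_eq_zero hc _)
  rw [hside, hside, show p2 = U.card - p1 by omega]
  exact sum_connL_eq_sum_connL_card_sub (fun e he => (hEH e he).2.2)
    (fun n => (y - 1) ^ (n + 1 - VH.card)) (show p1 ≤ U.card by omega)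

/-- `Σ T_G(1,y)` over connected `G = H ∪ Q`, `Q` complete tiered on `U`
with tier sizes `(p1,p2)`, equals the same sum with tier sizes `(p2,p1)`.  For a
connected graph, `T_G(1,y)` is the spanning-tree expansion `Σ_T y^{ea(T)}` with
respect to any injective edge weighting `ω`. -/
theorem stmt13 (VH : Finset ℕ) (EH : Finset LEdge)
    (hEH : ∀ e ∈ EH, e.1.1 ∈ VH ∧ e.1.2 ∈ VH ∧ e.2 ≠ 0)
    (U : Finset ℕ) (hUV : U ⊆ VH) (hUne : U.Nonempty) (hpos : ∀ v ∈ U, 0 < v)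
    (p1 p2 : ℕ) (hp : p1 + p2 = U.card)
    (y : ℤ) (ω : LEdge → ℝ) (hω : Function.Injective ω) :
    ∑ S ∈ U.powerset.filter (fun S => S.card = p1 ∧ connL VH (qE U EH S)),
      ∑ T ∈ (qE U EH S).powerset.filter (fun T => IsLTree VH T),
        y ^ eaL (qE U EH S) T ω
    = ∑ S ∈ U.powerset.filter (fun S => S.card = p2 ∧ connL VH (qE U EH S)),
        ∑ T ∈ (qE U EH S).powerset.filter (fun T => IsLTree VH T),
          y ^ eaL (qE U EH S) T ω :=
  stmt13_general VH EH hEH U hUV hUne p1 p2 hp y ω hω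

end
end

section
/- Let G be a complete tiered graph with two tiers and V(G) = [n+2]. For i = 1, 2 let a_i(G) = |{r ∈ [n+1] : r ∈ V_i(G) and r+1 ∈ V_{3−i}(G)}|. If G is connected, then a_1(G) − a_2(G) = 1. -/
open Finset

attribute [local instance 10] Classical.propDecidable

noncomputable section

/-! Along `1, 2, …, n+2` the tier changes alternate between `V₁ → V₂` and `V₂ → V₁`, so
`a₁ − a₂ = [1 ∈ V₁] − [n+2 ∈ V₁]`. In a connected complete tiered graph, vertex `1` can only be
joined to larger vertices, hence lies in `V₁`, and likewise `n+2` lies in `V₂`. -/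

theorem card_filter_descent_add_ite (p : ℕ → Prop) [DecidablePred p] {m n : ℕ} (hmn : m ≤ n) :
    ((Ico m n).filter fun r => p r ∧ ¬ p (r + 1)).card + (if p n then 1 else 0)
      = ((Ico m n).filter fun r => ¬ p r ∧ p (r + 1)).card + (if p m then 1 else 0) := by
  set ind : ℕ → ℤ := fun r => if p r then 1 else 0
  have htele : ∑ r ∈ Ico m n,
      ((if p r ∧ ¬ p (r + 1) then 1 else 0 : ℤ) - if ¬ p r ∧ p (r + 1) then 1 else 0)
        = ind m - ind n := by
    rw [← neg_sub, ← sum_Ico_sub ind hmn, ← sum_neg_distrib]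
    refine sum_congr rfl fun r _ => ?_
    by_cases hr : p r <;> by_cases hr' : p (r + 1) <;> simp [ind, hr, hr']
  rw [sum_sub_distrib] at htele
  zify
  simp only [card_filter, Nat.cast_sum, Nat.cast_ite, Nat.cast_one, Nat.cast_zero]
  linarith

theorem mem_ctE2_iff {A B : Finset ℕ} {u v : ℕ} : (u, v) ∈ ctE2 A B ↔ u ∈ A ∧ v ∈ B ∧ u < v := by
  simp [ctE2, and_assoc]

theorem exists_adjP_of_connP {V : Finset ℕ} {E : Finset PEdge} (hconn : connP V E) {u v : ℕ}
    (hu : u ∈ V) (hv : v ∈ V) (huv : u ≠ v) : ∃ w ∈ V, adjP E u w := by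
  rcases (hconn.2 u hu v hv).cases_head with rfl | ⟨w, huw, -⟩
  · exact (huv rfl).elim
  · exact ⟨w, huw.elim (fun h => (hconn.1 _ h).2) (fun h => (hconn.1 _ h).1), huw⟩

theorem mem_left_of_connP_ctE2_of_isLeast {V A B : Finset ℕ} (hconn : connP V (ctE2 A B))
    {u v : ℕ} (hu : IsLeast V u) (hv : v ∈ V) (huv : u ≠ v) : u ∈ A := by
  obtain ⟨w, hw, h | h⟩ := exists_adjP_of_connP hconn hu.1 hv huv
  · exact (mem_ctE2_iff.1 h).1
  · exact absurd (mem_ctE2_iff.1 h).2.2 (not_lt.2 (hu.2 hw))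

theorem mem_right_of_connP_ctE2_of_isGreatest {V A B : Finset ℕ} (hconn : connP V (ctE2 A B))
    {u v : ℕ} (hu : IsGreatest V u) (hv : v ∈ V) (huv : u ≠ v) : u ∈ B := by
  obtain ⟨w, hw, h | h⟩ := exists_adjP_of_connP hconn hu.1 hv huv
  · exact absurd (mem_ctE2_iff.1 h).2.2 (not_lt.2 (hu.2 hw))
  · exact (mem_ctE2_iff.1 h).2.1

theorem stmt17_general (n : ℕ) (S : Finset ℕ)
    (hconn : connP (Finset.Icc 1 (n + 2)) (ctE2 S (Finset.Icc 1 (n + 2) \ S))) :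
    ((Finset.Icc 1 (n + 1)).filter fun r => r ∈ S ∧ r + 1 ∉ S).card
      = ((Finset.Icc 1 (n + 1)).filter fun r => r ∉ S ∧ r + 1 ∈ S).card + 1 := by
  have hleast : IsLeast (Icc 1 (n + 2) : Set ℕ) 1 := by
    rw [coe_Icc]; exact isLeast_Icc (by omega)
  have hgreatest : IsGreatest (Icc 1 (n + 2) : Set ℕ) (n + 2) := by
    rw [coe_Icc]; exact isGreatest_Icc (by omega)
  have hfirst : 1 ∈ S :=
    mem_left_of_connP_ctE2_of_isLeast hconn hleast hgreatest.1 (by omega)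
  have hlast : n + 2 ∉ S :=
    (mem_sdiff.1 (mem_right_of_connP_ctE2_of_isGreatest hconn hgreatest hleast.1 (by omega))).2
  have hcount := card_filter_descent_add_ite (· ∈ S) (show 1 ≤ n + 1 + 1 by omega)
  rw [Ico_add_one_right_eq_Icc] at hcount
  simpa [hfirst, hlast] using hcount

/-- for a connected complete tiered graph `G` with two tiers on `[n+2]`
(tier-1 set `S`), with `a_i(G) = |{r ∈ [n+1] : r ∈ V_i(G), r+1 ∈ V_{3-i}(G)}|`,
we have `a_1(G) − a_2(G) = 1`. -/
theorem stmt17 (n : ℕ) (S : Finset ℕ) (hS : S ⊆ Finset.Icc 1 (n + 2))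
    (hconn : connP (Finset.Icc 1 (n + 2)) (ctE2 S (Finset.Icc 1 (n + 2) \ S))) :
    ((Finset.Icc 1 (n + 1)).filter fun r => r ∈ S ∧ r + 1 ∉ S).card
      = ((Finset.Icc 1 (n + 1)).filter fun r => r ∉ S ∧ r + 1 ∈ S).card + 1 :=
  stmt17_general n S hconn

end
end
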